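/- Let p ∈ (0,1] and T > 0, and let (S_m)_{m≥1} be any sequence of real numbers with |S_m| ≤ m for all m ≥ 1. Then there exist a constant C > 0 and an integer N such that for all n ≥ N, sup_{t∈[0,T]} |(a_{n+⌊nt⌋}/a_n)·S_{n+⌊nt⌋} − (1+t)^{1−2p}·S_{n+⌊nt⌋}| / √n ≤ C/√n; in particular this supremum tends to 0 as n → ∞. -/

import Mathlib

/-! With `q = 2p - 1`, `Γ(x + 1) = x Γ(x)` turns `a_{n+m} / a_n` into `∏_{k<m} (n+k)/(n+k+q)`.
Concavity of `log` squeezes each slope `(log (y+q) - log y) / q` between `log (y+1) - log y` and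
`log (y+q) - log (y+q-1)`; both bounds telescope, so the ratio is `ρ^(-q)` for some `ρ` between
`(n+m)/n` and `(n+m+q-1)/(n+q-1)`. For `m = ⌊nt⌋` both are within `O(1/n)` of `1 + t`, and
`x ↦ x^(-q)` is `1`-Lipschitz on `[1, ∞)` because `|q| ≤ 1`. So the ratio is `O(1/n)`-close to
`(1+t)^(1-2p)`, and multiplying by `|S_{n+m}| = O(n)` leaves a bounded numerator. -/

/-- `a p n = Γ(2p)·Γ(n)/Γ(n+2p−1)`. -/
noncomputable def a (p : ℝ) (n : ℕ) : ℝ :=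
  Real.Gamma (2*p) * Real.Gamma n / Real.Gamma ((n:ℝ) + 2*p - 1)

open Real Filter Set

lemma slope_log_mem_Icc {y q : ℝ} (hy : 0 < y + q - 1) (hq : q ≤ 1) (hq0 : q ≠ 0) :
    slope log y (y + q) ∈ Icc (log (y + 1) - log y) (log (y + q) - log (y + q - 1)) := by
  have hlog := strictConcaveOn_log_Ioi.concaveOn
  constructor
  · have h := hlog.slope_anti (x := y) (mem_Ioi.2 (by linarith))
      (a := y + q) (b := y + 1) ⟨mem_Ioi.2 (by linarith), by simpa using hq0⟩
      ⟨mem_Ioi.2 (by linarith), by simp⟩ (by linarith)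
    simpa [slope_def_field, div_neg] using h
  · have h := hlog.slope_anti (x := y + q) (mem_Ioi.2 (by linarith))
      (a := y + q - 1) (b := y) ⟨mem_Ioi.2 (by linarith), by simp⟩
      ⟨mem_Ioi.2 (by linarith), by simpa [eq_comm] using hq0⟩ (by linarith)
    rw [slope_comm] at h
    simpa [slope_def_field, div_neg] using h

lemma exists_prod_div_add_eq_rpow {x q : ℝ} (hx : 0 < x + q - 1) (hq : q ≤ 1) (m : ℕ) :
    ∃ ρ ∈ Icc ((x + m) / x) ((x + m + q - 1) / (x + q - 1)),
      ∏ k ∈ Finset.range m, (x + k) / (x + k + q) = ρ ^ (-q) := by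
  have hx0 : 0 < x := by linarith
  have hpos : ∀ k : ℕ, 0 < x + k + q - 1 := fun k => by
    linarith [(Nat.cast_nonneg k : (0:ℝ) ≤ k)]
  rcases eq_or_ne q 0 with rfl | hq0
  · refine ⟨(x + m) / x, left_mem_Icc.2 ?_, ?_⟩
    · rw [div_le_div_iff₀ hx0 (by linarith)]
      nlinarith [(Nat.cast_nonneg m : (0:ℝ) ≤ m)]
    · rw [neg_zero, rpow_zero]
      exact Finset.prod_eq_one fun k _ => by rw [add_zero, div_self (by linarith [hpos k])]
  have hslope := fun k : ℕ => slope_log_mem_Icc (hpos k) hq hq0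
  have telescope : ∀ c : ℝ, 0 < c → 0 < c + m →
      exp (∑ k ∈ Finset.range m, (log (c + (k + 1 : ℕ)) - log (c + k))) = (c + m) / c := by
    intro c hc hcm
    rw [Finset.sum_range_sub (fun k : ℕ => log (c + k)), Nat.cast_zero, add_zero,
      exp_sub, exp_log hcm, exp_log hc]
  set σ := ∑ k ∈ Finset.range m, slope log (x + k) (x + k + q)
  refine ⟨exp σ, ⟨?_, ?_⟩, ?_⟩
  · rw [← telescope x hx0 (by positivity)]
    refine exp_le_exp.2 (Finset.sum_le_sum fun k _ => ?_)
    simpa [add_assoc] using (hslope k).1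
  · rw [show x + m + q - 1 = (x + q - 1) + m by ring, ← telescope _ hx (by linarith [hpos m])]
    refine exp_le_exp.2 (Finset.sum_le_sum fun k _ => ?_)
    convert (hslope k).2 using 2 <;> push_cast <;> ring_nf
  · rw [rpow_def_of_pos (exp_pos σ), log_exp, Finset.sum_mul, exp_sum]
    refine Finset.prod_congr rfl fun k _ => ?_
    have hk : 0 < x + k := by linarith [hpos k]
    have hexp : (log (x + k + q) - log (x + k)) / q * -q = log (x + k) - log (x + k + q) := by
      field_simp
      ring
    rw [slope_def_field, add_sub_cancel_left, hexp, exp_sub, exp_log hk,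
      exp_log (by linarith [hpos k])]

lemma a_pos {p : ℝ} (hp : 0 < p) {n : ℕ} (hn : n ≠ 0) : 0 < a p n := by
  have hn1 : (1:ℝ) ≤ n := Nat.one_le_cast.2 (Nat.one_le_iff_ne_zero.2 hn)
  exact div_pos (mul_pos (Gamma_pos_of_pos (by linarith)) (Gamma_pos_of_pos (by linarith)))
    (Gamma_pos_of_pos (by linarith))

lemma a_succ {p : ℝ} {n : ℕ} (hn : n ≠ 0) (hnp : 0 < (n:ℝ) + 2*p - 1) :
    a p (n + 1) = a p n * (n / (n + (2*p - 1))) := by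
  have hn' : (n:ℝ) ≠ 0 := Nat.cast_ne_zero.2 hn
  have hΓ := (Gamma_pos_of_pos hnp).ne'
  have hnp' : (n:ℝ) + (2*p - 1) ≠ 0 := by linarith
  rw [a, a, Nat.cast_succ, Gamma_add_one hn',
    show (n:ℝ) + 1 + 2*p - 1 = (n + 2*p - 1) + 1 by ring, Gamma_add_one hnp.ne']
  field_simp
  ring

lemma a_add {p : ℝ} {n : ℕ} (hn : n ≠ 0) (hnp : 0 < (n:ℝ) + 2*p - 1) (m : ℕ) :
    a p (n + m) = a p n * ∏ k ∈ Finset.range m, (n + k) / (n + k + (2*p - 1)) := by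
  induction m with
  | zero => simp
  | succ m ih =>
    have hm : 0 < ((n + m : ℕ) : ℝ) + 2*p - 1 := by
      push_cast
      linarith [(Nat.cast_nonneg m : (0:ℝ) ≤ m)]
    rw [← add_assoc, a_succ (by omega) hm, ih, Finset.prod_range_succ]
    push_cast
    ring

lemma abs_rpow_sub_rpow_le {e x y : ℝ} (he : |e| ≤ 1) (hx : 1 ≤ x) (hy : 1 ≤ y) :
    |x ^ e - y ^ e| ≤ |x - y| := by
  have hderiv : ∀ z ∈ Ici (1:ℝ), HasDerivWithinAt (· ^ e) (e * z ^ (e - 1)) (Ici 1) z :=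
    fun z hz => (hasDerivAt_rpow_const (Or.inl (by linarith [mem_Ici.1 hz]))).hasDerivWithinAt
  have hbound : ∀ z ∈ Ici (1:ℝ), ‖e * z ^ (e - 1)‖ ≤ 1 := fun z hz => by
    rw [norm_mul, norm_of_nonneg (rpow_nonneg (by linarith [mem_Ici.1 hz]) _)]
    exact mul_le_one₀ he (rpow_nonneg (by linarith [mem_Ici.1 hz]) _)
      (rpow_le_one_of_one_le_of_nonpos hz (by linarith [(abs_le.1 he).2]))
  simpa using (convex_Ici 1).norm_image_sub_le_of_norm_hasDerivWithin_le hderiv hbound hy hx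

lemma abs_sub_one_add_le {x q m t T ρ : ℝ} (hx : 4 ≤ x) (hq : -1 ≤ q)
    (hm0 : 0 ≤ m) (hm : m ≤ x * t) (hm' : x * t < m + 1) (ht : t ≤ T)
    (hρ : ρ ∈ Icc ((x + m) / x) ((x + m + q - 1) / (x + q - 1))) :
    |ρ - (1 + t)| ≤ (4 * T + 1) / x := by
  have hx0 : 0 < x := by linarith
  have hy : x / 2 ≤ x + q - 1 := by linarith
  have hlow : (x + m) / x - (1 + t) ≥ -1 / x := by
    rw [ge_iff_le, div_sub' hx0.ne', div_le_div_iff_of_pos_right hx0]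
    linarith
  have hup : (x + m + q - 1) / (x + q - 1) - (1 + t) ≤ 4 * T / x := by
    have ht0 : 0 ≤ t := by nlinarith
    rw [div_sub' (by linarith), div_le_div_iff₀ (by linarith) hx0]
    nlinarith [mul_le_mul_of_nonneg_left hm (by linarith : 0 ≤ x + q - 1),
      mul_nonneg hm0 (by linarith : 0 ≤ 1 + q), mul_le_mul_of_nonneg_left ht hx0.le,
      mul_le_mul_of_nonneg_left hy (by linarith : 0 ≤ T)]
  rw [abs_le]
  constructor
  · have : -((4 * T + 1) / x) ≤ -1 / x := by
      rw [neg_div, neg_le_neg_iff]; exact div_le_div_of_nonneg_right (by nlinarith) hx0.le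
    linarith [hρ.1]
  · have : 4 * T / x ≤ (4 * T + 1) / x := div_le_div_of_nonneg_right (by linarith) hx0.le
    linarith [hρ.2]

lemma abs_a_div_sub_rpow_le {p T t : ℝ} (hp : p ∈ Ioc (0:ℝ) 1) (ht : t ∈ Icc 0 T) {n : ℕ}
    (hn : 4 ≤ n) :
    |a p (n + ⌊(n:ℝ) * t⌋₊) / a p n - (1 + t) ^ (1 - 2*p)| ≤ (4 * T + 1) / n := by
  obtain ⟨hp0, hp1⟩ := hp
  have hnR : (4:ℝ) ≤ n := by exact_mod_cast hn
  set m := ⌊(n:ℝ) * t⌋₊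
  obtain ⟨ρ, hρ, hprod⟩ :=
    exists_prod_div_add_eq_rpow (x := n) (q := 2*p - 1) (by linarith) (by linarith) m
  rw [a_add (by omega) (by linarith) m, mul_div_cancel_left₀ _ (a_pos hp0 (by omega)).ne', hprod,
    show 1 - 2*p = -(2*p - 1) by ring]
  have hρ1 : 1 ≤ ρ := le_trans (by rw [le_div_iff₀ (by linarith)]; simp) hρ.1
  calc |ρ ^ (-(2*p - 1)) - (1 + t) ^ (-(2*p - 1))|
      ≤ |ρ - (1 + t)| := abs_rpow_sub_rpow_le (by rw [abs_le]; constructor <;> linarith) hρ1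
        (by linarith [ht.1])
    _ ≤ (4 * T + 1) / n := abs_sub_one_add_le hnR (by linarith) (Nat.cast_nonneg m)
        (Nat.floor_le (by have := ht.1; positivity)) (Nat.lt_floor_add_one _) ht.2 hρ

theorem stmt_4 (p : ℝ) (hp : p ∈ Set.Ioc (0:ℝ) 1) (T : ℝ) (hT : 0 < T)
    (S : ℕ → ℝ) (hS : ∀ m : ℕ, 1 ≤ m → |S m| ≤ m) :
    (∃ C > (0:ℝ), ∃ N : ℕ, ∀ n : ℕ, N ≤ n →
      ∀ t ∈ Set.Icc (0:ℝ) T,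
        |(a p (n + ⌊(n:ℝ) * t⌋₊) / a p n) * S (n + ⌊(n:ℝ) * t⌋₊) -
            (1 + t) ^ (1 - 2*p) * S (n + ⌊(n:ℝ) * t⌋₊)| / Real.sqrt n
          ≤ C / Real.sqrt n) ∧
    Filter.Tendsto
      (fun n : ℕ => ⨆ t : Set.Icc (0:ℝ) T,
        |(a p (n + ⌊(n:ℝ) * t.1⌋₊) / a p n) * S (n + ⌊(n:ℝ) * t.1⌋₊) -
            (1 + t.1) ^ (1 - 2*p) * S (n + ⌊(n:ℝ) * t.1⌋₊)| / Real.sqrt n)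
      Filter.atTop (nhds 0) := by
  set C := (4 * T + 1) * (1 + T) with hC
  have bound : ∀ n : ℕ, 4 ≤ n → ∀ t ∈ Icc (0:ℝ) T,
      |(a p (n + ⌊(n:ℝ) * t⌋₊) / a p n) * S (n + ⌊(n:ℝ) * t⌋₊) -
          (1 + t) ^ (1 - 2*p) * S (n + ⌊(n:ℝ) * t⌋₊)| / √n ≤ C / √n := by
    intro n hn t ht
    have hn0 : (0:ℝ) < n := by positivity
    have hm : (⌊(n:ℝ) * t⌋₊ : ℝ) ≤ n * T :=
      (Nat.floor_le (by have := ht.1; positivity)).trans (by nlinarith [ht.2])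
    have hSm : |S (n + ⌊(n:ℝ) * t⌋₊)| ≤ n * (1 + T) :=
      (hS _ (by omega)).trans (by push_cast; linarith)
    gcongr
    rw [← sub_mul, abs_mul]
    calc _ ≤ (4 * T + 1) / n * (n * (1 + T)) :=
          mul_le_mul (abs_a_div_sub_rpow_le hp ht hn) hSm (abs_nonneg _) (by positivity)
      _ = C := by rw [hC]; field_simp
  refine ⟨⟨C, by positivity, 4, bound⟩, ?_⟩
  have : Nonempty (Icc (0:ℝ) T) := ⟨⟨0, le_rfl, hT.le⟩⟩
  refine squeeze_zero' (Eventually.of_forall fun n => Real.iSup_nonneg fun t => by positivity)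
    ((eventually_ge_atTop 4).mono fun n hn => ciSup_le fun t => bound n hn t.1 t.2) ?_
  exact tendsto_const_nhds.div_atTop (tendsto_sqrt_atTop.comp tendsto_natCast_atTop_atTop)
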